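/- arXiv:1007.1039 — 2 statements merged into one kernel-verified Lean document; each statement's English description precedes it below -/
import Mathlib

section
/- Fix n ≥ 0. For each N > n, all eigenvalues of −Q̂_n^{(N)} are real; denote them in increasing order by λ̂_{n,1}^{(N)} ≤ ⋯ ≤ λ̂_{n,N−n}^{(N)}. Then for every 1 ≤ ν ≤ N−n, λ̂_{n,ν}^{(N+1)} ≤ λ̂_{n,ν}^{(N)}; that is, the ν-th smallest eigenvalue of −Q̂_n^{(N)} is nonincreasing in N. -/
/-- The generator `Q̂_n^{(N)}` of the birth–death chain on `{n,…,N}` absorbed at `n` and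
reflected at `N`, restricted to `{n+1,…,N}`.  The index `i : Fin (N - n)` corresponds to the
state `n + 1 + i`. -/
noncomputable def bdMatrixHat (a b : ℕ → ℝ) (n N : ℕ) :
    Matrix (Fin (N - n)) (Fin (N - n)) ℝ :=
  fun i j =>
    if (j : ℕ) = (i : ℕ) + 1 then b (n + 1 + i)
    else if (i : ℕ) = (j : ℕ) + 1 then a (n + 1 + i)
    else if (i : ℕ) = (j : ℕ) then
      (if n + 1 + (i : ℕ) = N then -(a N) else -(a (n + 1 + i) + b (n + 1 + i)))
    else 0

/-!
With `μ` the reversible measure of the chain (`μ k * b k = μ (k + 1) * a (k + 1)`), one has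
`diag μ * (-Q̂) = Kᵀ K`, where `(K f)_s = √(μ_s a_s) (f_s - f_{s-1})` (with `f_n = 0`) is the
weighted gradient. Conjugating by `diag √μ` therefore turns `-Q̂` into the positive operator
`M* M`, `M = K (diag √μ)⁻¹`, with the same characteristic polynomial. By Courant–Fischer, the
number of its eigenvalues `≤ t` is the largest dimension of a subspace on which the energy
`‖K f‖²` is at most `t` times the `μ`-norm of `f`. Extending `f` constantly to the new state
`N + 1` keeps the energy and does not decrease the `μ`-norm, so for `t ≥ 0` this count can only
grow with `N` (for `t < 0` it is zero). As the eigenvalues are sorted, `λ_ν ≤ t` exactly when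
more than `ν` of them are `≤ t`.
-/

open Module Finset Matrix Polynomial RealInnerProductSpace

theorem Multiset.countP_map_univ_val {ι α : Type*} [Fintype ι] (f : ι → α) (p : α → Prop)
    [DecidablePred p] : (univ.val.map f).countP p = #{i | p (f i)} := by
  rw [Multiset.countP_map]; rfl

theorem Polynomial.roots_prod_X_sub_C_eq_map {R ι : Type*} [CommRing R] [IsDomain R]
    (s : Finset ι) (f : ι → R) : (∏ i ∈ s, (X - C (f i))).roots = s.val.map f := by
  rw [Finset.prod_eq_multiset_prod, ← roots_multiset_prod_X_sub_C (s.val.map f), Multiset.map_map]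
  rfl

theorem Monotone.le_iff_lt_card_filter_le {α : Type*} [LinearOrder α] {m : ℕ} {f : Fin m → α}
    (hf : Monotone f) (v : Fin m) (t : α) : f v ≤ t ↔ (v : ℕ) < #{j | f j ≤ t} := by
  constructor
  · intro hv
    calc (v : ℕ) < #(Iic v) := by rw [Fin.card_Iic]; omega
      _ ≤ #{j | f j ≤ t} := card_le_card fun j hj => by
        simpa using (hf (mem_Iic.1 hj)).trans hv
  · intro hv
    by_contra! htv
    have : #{j | f j ≤ t} ≤ #(Iio v) := card_le_card fun j hj => by
      simp only [mem_filter, mem_univ, true_and] at hj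
      exact mem_Iio.2 (lt_of_not_ge fun hvj => (htv.trans_le (hf hvj)).not_ge hj)
    rw [Fin.card_Iio] at this
    omega

theorem OrthonormalBasis.norm_sq_eq_sum_repr_sq {ι E : Type*} [Fintype ι] [NormedAddCommGroup E]
    [InnerProductSpace ℝ E] (B : OrthonormalBasis ι ℝ E) (x : E) :
    ‖x‖ ^ 2 = ∑ i, B.repr x i ^ 2 := by
  rw [← B.repr.norm_map, EuclideanSpace.norm_sq_eq]
  simp

namespace LinearMap.IsSymmetric

variable {E : Type*} [NormedAddCommGroup E] [InnerProductSpace ℝ E] [FiniteDimensional ℝ E]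
  {T : E →ₗ[ℝ] E} (hT : T.IsSymmetric)

include hT

theorem countP_roots_charpoly (t : ℝ) :
    T.charpoly.roots.countP (· ≤ t) = #{i | hT.eigenvalues rfl i ≤ t} := by
  rw [hT.roots_charpoly_eq_eigenvalues rfl, Multiset.countP_map_univ_val]
  simp

theorem inner_apply_self_eq_sum (x : E) :
    ⟪T x, x⟫ = ∑ i, hT.eigenvalues rfl i * (hT.eigenvectorBasis rfl).repr x i ^ 2 := by
  rw [← (hT.eigenvectorBasis rfl).repr.inner_map_map, PiLp.inner_apply]
  simp only [hT.eigenvectorBasis_apply_self_apply]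
  exact Finset.sum_congr rfl fun i _ => by simp; ring

theorem inner_apply_self_sub_mul_norm_sq (t : ℝ) (x : E) :
    ⟪T x, x⟫ - t * ‖x‖ ^ 2 =
      ∑ i, (hT.eigenvalues rfl i - t) * (hT.eigenvectorBasis rfl).repr x i ^ 2 := by
  rw [hT.inner_apply_self_eq_sum, (hT.eigenvectorBasis rfl).norm_sq_eq_sum_repr_sq, mul_sum,
    ← sum_sub_distrib]
  exact Finset.sum_congr rfl fun i _ => by ring

-- A nonzero vector of `V` without components on the eigenvalues `≤ t` would violate `hV`.
theorem finrank_le_countP_roots_charpoly {t : ℝ} {V : Submodule ℝ E}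
    (hV : ∀ x ∈ V, ⟪T x, x⟫ ≤ t * ‖x‖ ^ 2) :
    finrank ℝ V ≤ T.charpoly.roots.countP (· ≤ t) := by
  set B := hT.eigenvectorBasis rfl
  let coord : V →ₗ[ℝ] {i // hT.eigenvalues rfl i ≤ t} → ℝ :=
    { toFun x i := B.repr x i
      map_add' x y := by ext; simp
      map_smul' c x := by ext; simp }
  have hcoord : Function.Injective coord := by
    rw [← LinearMap.ker_eq_bot, Submodule.eq_bot_iff]
    intro x hx
    have hlow : ∀ i, hT.eigenvalues rfl i ≤ t → B.repr x i = 0 := fun i hi =>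
      congrFun hx ⟨i, hi⟩
    have hterm : ∀ i, 0 ≤ (hT.eigenvalues rfl i - t) * B.repr x i ^ 2 := fun i => by
      rcases le_or_gt (hT.eigenvalues rfl i) t with hi | hi
      · simp [hlow i hi]
      · positivity
    have hsum : ∑ i, (hT.eigenvalues rfl i - t) * B.repr x i ^ 2 ≤ 0 := by
      rw [← hT.inner_apply_self_sub_mul_norm_sq]
      exact sub_nonpos.2 (hV x x.2)
    have hzero := (Finset.sum_eq_zero_iff_of_nonneg fun i _ => hterm i).1
      (le_antisymm hsum (Finset.sum_nonneg fun i _ => hterm i))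
    ext1
    refine B.repr.injective (PiLp.ext fun i => ?_)
    rcases le_or_gt (hT.eigenvalues rfl i) t with hi | hi
    · simpa using hlow i hi
    · simpa [(sub_pos.2 hi).ne'] using hzero i (Finset.mem_univ i)
  calc finrank ℝ V ≤ finrank ℝ ({i // hT.eigenvalues rfl i ≤ t} → ℝ) :=
        LinearMap.finrank_le_finrank_of_injective hcoord
    _ = _ := by rw [Module.finrank_fintype_fun_eq_card, Fintype.card_subtype,
        hT.countP_roots_charpoly]

theorem exists_finrank_eq_countP_roots_charpoly (t : ℝ) :
    ∃ V : Submodule ℝ E, finrank ℝ V = T.charpoly.roots.countP (· ≤ t) ∧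
      ∀ x ∈ V, ⟪T x, x⟫ ≤ t * ‖x‖ ^ 2 := by
  set B := hT.eigenvectorBasis rfl
  let v : {i // hT.eigenvalues rfl i ≤ t} → E := B ∘ Subtype.val
  refine ⟨Submodule.span ℝ (Set.range v), ?_, fun x hx => ?_⟩
  · rw [finrank_span_eq_card (B.orthonormal.linearIndependent.comp _ Subtype.val_injective),
      Fintype.card_subtype, hT.countP_roots_charpoly]
  · have hhigh : ∀ i, t < hT.eigenvalues rfl i → B.repr x i = 0 := by
      intro i hi
      rw [B.repr_apply_apply]
      refine Submodule.span_induction ?_ (by simp)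
        (fun _ _ _ _ h₁ h₂ => by simp [inner_add_right, h₁, h₂])
        (fun c _ _ h => by simp [inner_smul_right, h]) hx
      rintro _ ⟨j, rfl⟩
      exact B.orthonormal.inner_eq_zero fun hij => (hij ▸ hi).not_ge j.2
    rw [← sub_nonpos, hT.inner_apply_self_sub_mul_norm_sq]
    refine Finset.sum_nonpos fun i _ => ?_
    rcases le_or_gt (hT.eigenvalues rfl i) t with hi | hi
    · exact mul_nonpos_of_nonpos_of_nonneg (sub_nonpos.2 hi) (sq_nonneg _)
    · rw [show (hT.eigenvectorBasis rfl).repr x i = 0 from hhigh i hi]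
      simp

end LinearMap.IsSymmetric

namespace LinearMap

variable {E F : Type*} [NormedAddCommGroup E] [InnerProductSpace ℝ E] [FiniteDimensional ℝ E]
  [NormedAddCommGroup F] [InnerProductSpace ℝ F] [FiniteDimensional ℝ F]

theorem IsPositive.nonneg_of_mem_roots_charpoly {T : E →ₗ[ℝ] E} (hT : T.IsPositive) {μ : ℝ}
    (hμ : μ ∈ T.charpoly.roots) : 0 ≤ μ := by
  rw [hT.isSymmetric.roots_charpoly_eq_eigenvalues rfl] at hμ
  obtain ⟨i, -, rfl⟩ := Multiset.mem_map.1 hμ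
  exact hT.nonneg_eigenvalues rfl i

theorem countP_roots_charpoly_le_of_inner_map_le {T : E →ₗ[ℝ] E} {S : F →ₗ[ℝ] F}
    (hT : T.IsSymmetric) (hS : S.IsPositive) (J : F →ₗ[ℝ] E)
    (hJ : ∀ x, ⟪T (J x), J x⟫ ≤ ⟪S x, x⟫) (hJ_norm : ∀ x, ‖x‖ ≤ ‖J x‖) (t : ℝ) :
    S.charpoly.roots.countP (· ≤ t) ≤ T.charpoly.roots.countP (· ≤ t) := by
  rcases lt_or_ge t 0 with ht | ht
  · rw [Multiset.countP_eq_zero.2 fun μ hμ hμt =>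
      (hS.nonneg_of_mem_roots_charpoly hμ).not_gt (hμt.trans_lt ht)]
    exact Nat.zero_le _
  obtain ⟨V, hVdim, hV⟩ := hS.isSymmetric.exists_finrank_eq_countP_roots_charpoly t
  have hJinj : Function.Injective J := by
    rw [← LinearMap.ker_eq_bot, Submodule.eq_bot_iff]
    intro x hx
    exact norm_le_zero_iff.1 ((hJ_norm x).trans_eq (by rw [LinearMap.mem_ker.1 hx, norm_zero]))
  rw [← hVdim, (Submodule.equivMapOfInjective J hJinj V).finrank_eq]
  refine hT.finrank_le_countP_roots_charpoly ?_
  rintro _ ⟨x, hx, rfl⟩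
  calc ⟪T (J x), J x⟫ ≤ ⟪S x, x⟫ := hJ x
    _ ≤ t * ‖x‖ ^ 2 := hV x hx
    _ ≤ t * ‖J x‖ ^ 2 := by gcongr; exact hJ_norm x

end LinearMap

namespace Matrix

variable {ι : Type*} [Fintype ι] [DecidableEq ι]

theorem charpoly_toEuclideanLin_adjoint_comp (M : Matrix ι ι ℝ) :
    ((toEuclideanLin M).adjoint ∘ₗ toEuclideanLin M).charpoly = (Mᵀ * M).charpoly := by
  rw [← toEuclideanLin_conjTranspose_eq_adjoint, conjTranspose_eq_transpose_of_trivial,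
    ← toLpLin_mul_same]
  exact charpoly_toLin (Mᵀ * M) (EuclideanSpace.basisFun ι ℝ).toBasis

-- `(K D⁻¹)ᵀ (K D⁻¹) = D⁻¹ (diag w * A) D⁻¹ = D A D⁻¹` for `D = diag √w`.
theorem charpoly_eq_of_diagonal_mul_eq_transpose_mul_self {A K : Matrix ι ι ℝ} {w : ι → ℝ}
    (hw : ∀ i, 0 < w i) (h : diagonal w * A = Kᵀ * K) :
    A.charpoly =
      ((K * diagonal fun i => (√(w i))⁻¹)ᵀ * (K * diagonal fun i => (√(w i))⁻¹)).charpoly := by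
  have hsq : (diagonal fun i => (√(w i))⁻¹) * (diagonal fun i => (√(w i))⁻¹) = diagonal w⁻¹ := by
    rw [diagonal_mul_diagonal]
    congr 1
    ext i
    rw [← mul_inv, Real.mul_self_sqrt (hw i).le, Pi.inv_apply]
  have hinv : diagonal w⁻¹ * diagonal w = 1 := by
    rw [diagonal_mul_diagonal, ← diagonal_one]
    congr 1
    ext i
    exact inv_mul_cancel₀ (hw i).ne'
  rw [transpose_mul, diagonal_transpose, Matrix.mul_assoc, ← Matrix.mul_assoc Kᵀ, ← h,
    charpoly_mul_comm, Matrix.mul_assoc, hsq, Matrix.mul_assoc, charpoly_mul_comm,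
    Matrix.mul_assoc, hinv, Matrix.mul_one]

end Matrix

-- The paper's `μ_k`.
noncomputable def bdWeight (a b : ℕ → ℝ) (k : ℕ) : ℝ := ∏ j ∈ range k, b j / a (j + 1)

theorem bdWeight_pos {a b : ℕ → ℝ} (ha : ∀ k, 1 ≤ k → 0 < a k) (hb : ∀ k, 0 < b k) (k : ℕ) :
    0 < bdWeight a b k :=
  prod_pos fun j _ => div_pos (hb j) (ha (j + 1) (Nat.le_add_left 1 j))

theorem bdWeight_succ_mul {a : ℕ → ℝ} (b : ℕ → ℝ) {k : ℕ} (hk : a (k + 1) ≠ 0) :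
    bdWeight a b (k + 1) * a (k + 1) = bdWeight a b k * b k := by
  rw [bdWeight, prod_range_succ, mul_assoc, div_mul_cancel₀ _ hk]
  rfl

-- The weighted gradient: `(K f)_i = √(μ_s a_s) (f_i - f_{i-1})` at the state `s = n + 1 + i`,
-- with `f_{-1} = 0`.
noncomputable def bdGradient (a b : ℕ → ℝ) (n p : ℕ) : Matrix (Fin p) (Fin p) ℝ :=
  fun k j => √(bdWeight a b (n + 1 + k) * a (n + 1 + k)) *
    if (j : ℕ) = k then 1 else if (j : ℕ) + 1 = k then -1 else 0

theorem bdGradient_transpose_mul_self_apply (a b : ℕ → ℝ) (n p : ℕ) (i j : Fin p) :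
    ((bdGradient a b n p)ᵀ * bdGradient a b n p) i j =
      bdGradient a b n p i i * bdGradient a b n p i j +
        if h : (i : ℕ) + 1 < p then
          bdGradient a b n p ⟨i + 1, h⟩ i * bdGradient a b n p ⟨i + 1, h⟩ j
        else 0 := by
  have hvan : ∀ k : Fin p, k ≠ i → (k : ℕ) ≠ i + 1 → bdGradient a b n p k i = 0 := by
    intro k hki hki'
    rw [bdGradient, if_neg fun h => hki (Fin.ext h.symm), if_neg fun h => hki' h.symm, mul_zero]
  rw [mul_apply]
  simp only [transpose_apply]
  split_ifs with h
  · rw [Fintype.sum_eq_add i ⟨i + 1, h⟩ (by simp [Fin.ext_iff])]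
    rintro k ⟨hki, hki'⟩
    rw [hvan k hki (fun h' => hki' (Fin.ext h')), zero_mul]
  · rw [Fintype.sum_eq_single i, add_zero]
    intro k hki
    rw [hvan k hki (by omega), zero_mul]

theorem diagonal_bdWeight_mul_neg_bdMatrixHat {a b : ℕ → ℝ} (ha : ∀ k, 1 ≤ k → 0 < a k)
    (hb : ∀ k, 0 < b k) (n N : ℕ) :
    diagonal (fun i : Fin (N - n) => bdWeight a b (n + 1 + i)) * -bdMatrixHat a b n N =
      (bdGradient a b n (N - n))ᵀ * bdGradient a b n (N - n) := by
  have hc : ∀ k, √(bdWeight a b (n + 1 + k) * a (n + 1 + k)) *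
      √(bdWeight a b (n + 1 + k) * a (n + 1 + k)) = bdWeight a b (n + 1 + k) * a (n + 1 + k) :=
    fun k => Real.mul_self_sqrt (mul_nonneg (bdWeight_pos ha hb _).le (ha _ (by omega)).le)
  have hdb : ∀ k, bdWeight a b (n + 1 + k) * b (n + 1 + k) =
      bdWeight a b (n + 1 + (k + 1)) * a (n + 1 + (k + 1)) :=
    fun k => (bdWeight_succ_mul b (ha _ (by omega)).ne').symm
  ext i j
  rw [diagonal_mul, bdGradient_transpose_mul_self_apply]
  simp only [Matrix.neg_apply, bdMatrixHat, bdGradient, if_true]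
  split_ifs <;> first | omega | skip
  all_goals try rw [show a N = a (n + 1 + i) by rw [‹n + 1 + (i : ℕ) = N›]]
  all_goals linarith [hc i, hc (i + 1), hdb i]

theorem bdGradient_castSucc (a b : ℕ → ℝ) (n p : ℕ) (i j : Fin p) :
    bdGradient a b n (p + 1) i.castSucc j.castSucc = bdGradient a b n p i j := rfl

theorem bdGradient_castSucc_last (a b : ℕ → ℝ) (n p : ℕ) (i : Fin p) :
    bdGradient a b n (p + 1) i.castSucc (Fin.last p) = 0 := by
  simp only [bdGradient, Fin.val_castSucc, Fin.val_last]
  rw [if_neg (by omega), if_neg (by omega), mul_zero]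

theorem bdGradient_mulVec_snoc (a b : ℕ → ℝ) (n p : ℕ) (f : Fin (p + 1) → ℝ) :
    bdGradient a b n (p + 1 + 1) *ᵥ Fin.snoc f (f (Fin.last p)) =
      Fin.snoc (bdGradient a b n (p + 1) *ᵥ f) 0 := by
  ext i
  induction i using Fin.lastCases with
  | last =>
    simp only [mulVec, dotProduct, Fin.snoc_last]
    rw [Fin.sum_univ_castSucc]
    simp only [Fin.snoc_castSucc, Fin.snoc_last]
    rw [Fintype.sum_eq_single (Fin.last p)]
    · simp [bdGradient]
    · intro j hj
      have hj' : (j : ℕ) < p := Fin.val_lt_last hj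
      simp only [bdGradient, Fin.val_castSucc, Fin.val_last]
      rw [if_neg (by omega), if_neg (by omega), mul_zero, zero_mul]
  | cast i =>
    simp [mulVec, dotProduct, Fin.sum_univ_castSucc, bdGradient_castSucc, bdGradient_castSucc_last]

noncomputable def bdRoot (a b : ℕ → ℝ) (n p : ℕ) :
    EuclideanSpace ℝ (Fin p) →ₗ[ℝ] EuclideanSpace ℝ (Fin p) :=
  toEuclideanLin (bdGradient a b n p * diagonal fun i : Fin p => (√(bdWeight a b (n + 1 + i)))⁻¹)

noncomputable def bdSym (a b : ℕ → ℝ) (n p : ℕ) :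
    EuclideanSpace ℝ (Fin p) →ₗ[ℝ] EuclideanSpace ℝ (Fin p) :=
  (bdRoot a b n p).adjoint ∘ₗ bdRoot a b n p

theorem charpoly_bdSym {a b : ℕ → ℝ} (ha : ∀ k, 1 ≤ k → 0 < a k) (hb : ∀ k, 0 < b k)
    (n N : ℕ) : (bdSym a b n (N - n)).charpoly = (-bdMatrixHat a b n N).charpoly := by
  rw [bdSym, bdRoot, charpoly_toEuclideanLin_adjoint_comp,
    charpoly_eq_of_diagonal_mul_eq_transpose_mul_self (fun i => bdWeight_pos ha hb _)
      (diagonal_bdWeight_mul_neg_bdMatrixHat ha hb n N)]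

theorem isPositive_bdSym (a b : ℕ → ℝ) (n p : ℕ) : (bdSym a b n p).IsPositive :=
  LinearMap.isPositive_adjoint_comp_self _

theorem inner_bdSym_apply_self (a b : ℕ → ℝ) (n p : ℕ) (x : EuclideanSpace ℝ (Fin p)) :
    ⟪bdSym a b n p x, x⟫ = ‖bdRoot a b n p x‖ ^ 2 := by
  rw [bdSym, LinearMap.comp_apply, LinearMap.adjoint_inner_left, real_inner_self_eq_norm_sq]

-- In the coordinates `f = (diag √μ)⁻¹ x` this extends `f` constantly to the new state.
noncomputable def bdExtend (a b : ℕ → ℝ) (n p : ℕ) :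
    EuclideanSpace ℝ (Fin (p + 1)) →ₗ[ℝ] EuclideanSpace ℝ (Fin (p + 1 + 1)) where
  toFun x := WithLp.toLp 2 (Fin.snoc x.ofLp
    (√(bdWeight a b (n + 1 + (p + 1))) / √(bdWeight a b (n + 1 + p)) * x (Fin.last p)))
  map_add' x y := by
    ext i
    induction i using Fin.lastCases <;> simp [mul_add]
  map_smul' c x := by
    ext i
    induction i using Fin.lastCases <;> simp [mul_left_comm]

theorem norm_le_norm_bdExtend (a b : ℕ → ℝ) (n p : ℕ) (x : EuclideanSpace ℝ (Fin (p + 1))) :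
    ‖x‖ ≤ ‖bdExtend a b n p x‖ := by
  rw [← sq_le_sq₀ (norm_nonneg _) (norm_nonneg _), EuclideanSpace.norm_sq_eq,
    EuclideanSpace.norm_sq_eq, Fin.sum_univ_castSucc (fun i => ‖bdExtend a b n p x i‖ ^ 2)]
  simp only [bdExtend, LinearMap.coe_mk, AddHom.coe_mk, Fin.snoc_castSucc]
  exact le_add_of_nonneg_right (sq_nonneg _)

theorem bdRoot_bdExtend {a b : ℕ → ℝ} (ha : ∀ k, 1 ≤ k → 0 < a k) (hb : ∀ k, 0 < b k)
    (n p : ℕ) (x : EuclideanSpace ℝ (Fin (p + 1))) :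
    bdRoot a b n (p + 1 + 1) (bdExtend a b n p x) =
      WithLp.toLp 2 (Fin.snoc (bdRoot a b n (p + 1) x).ofLp 0) := by
  set f := (diagonal fun i : Fin (p + 1) => (√(bdWeight a b (n + 1 + i)))⁻¹) *ᵥ x.ofLp
  have hf : (diagonal fun i : Fin (p + 1 + 1) => (√(bdWeight a b (n + 1 + i)))⁻¹) *ᵥ
      (bdExtend a b n p x).ofLp = Fin.snoc f (f (Fin.last p)) := by
    ext i
    induction i using Fin.lastCases with
    | last =>
      simp only [bdExtend, LinearMap.coe_mk, AddHom.coe_mk, mulVec_diagonal, Fin.val_last,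
        Fin.snoc_last, f]
      have := Real.sqrt_pos.2 (bdWeight_pos ha hb (n + 1 + (p + 1)))
      field_simp
    | cast i => simp [f, bdExtend, mulVec_diagonal]
  simp only [bdRoot, toLpLin_apply, ← mulVec_mulVec, hf, bdGradient_mulVec_snoc]
  rfl

theorem inner_bdSym_bdExtend {a b : ℕ → ℝ} (ha : ∀ k, 1 ≤ k → 0 < a k) (hb : ∀ k, 0 < b k)
    (n p : ℕ) (x : EuclideanSpace ℝ (Fin (p + 1))) :
    ⟪bdSym a b n (p + 1 + 1) (bdExtend a b n p x), bdExtend a b n p x⟫ =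
      ⟪bdSym a b n (p + 1) x, x⟫ := by
  rw [inner_bdSym_apply_self, inner_bdSym_apply_self, bdRoot_bdExtend ha hb,
    EuclideanSpace.norm_sq_eq, EuclideanSpace.norm_sq_eq, Fin.sum_univ_castSucc]
  simp

theorem countP_roots_charpoly_bdSym_le {a b : ℕ → ℝ} (ha : ∀ k, 1 ≤ k → 0 < a k)
    (hb : ∀ k, 0 < b k) (n p : ℕ) (t : ℝ) :
    (bdSym a b n (p + 1)).charpoly.roots.countP (· ≤ t) ≤
      (bdSym a b n (p + 1 + 1)).charpoly.roots.countP (· ≤ t) :=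
  LinearMap.countP_roots_charpoly_le_of_inner_map_le (isPositive_bdSym a b n _).isSymmetric
    (isPositive_bdSym a b n _) (bdExtend a b n p) (fun x => (inner_bdSym_bdExtend ha hb n p x).le)
    (norm_le_norm_bdExtend a b n p) t

/-- fix `n`. If for each `N > n` the eigenvalues of `-Q̂_n^{(N)}` are all real
and listed in increasing order (with multiplicity) as `lam N`, then the `ν`-th smallest
eigenvalue is nonincreasing in `N`: `λ̂_{n,ν}^{(N+1)} ≤ λ̂_{n,ν}^{(N)}`. -/
theorem eigenvalues_hat_antitone_in_matrix_size
    (a b : ℕ → ℝ) (ha : ∀ k, 1 ≤ k → 0 < a k) (hb : ∀ k, 0 < b k)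
    (n : ℕ)
    (lam : (N : ℕ) → Fin (N - n) → ℝ)
    (hmono : ∀ N, n < N → Monotone (lam N))
    (hchar : ∀ N, n < N → (-(bdMatrixHat a b n N)).charpoly =
      ∏ ν : Fin (N - n), (Polynomial.X - Polynomial.C (lam N ν))) :
    ∀ N, n < N → ∀ ν : Fin (N - n),
      lam (N + 1) (Fin.castLE (by omega) ν) ≤ lam N ν := by
  intro N hN ν
  have hcount : ∀ p M, M - n = p → n < M → ∀ t,
      (bdSym a b n p).charpoly.roots.countP (· ≤ t) = #{j | lam M j ≤ t} := by
    rintro _ M rfl hM t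
    rw [charpoly_bdSym ha hb, hchar M hM, roots_prod_X_sub_C_eq_map, Multiset.countP_map_univ_val]
  obtain ⟨p, hp⟩ : ∃ p, N - n = p + 1 := ⟨N - n - 1, by omega⟩
  have hstep := countP_roots_charpoly_bdSym_le ha hb n p (lam N ν)
  rw [hcount _ N hp hN, hcount _ (N + 1) (by omega) (by omega)] at hstep
  rw [(hmono (N + 1) (by omega)).le_iff_lt_card_filter_le]
  exact ((hmono N hN).le_iff_lt_card_filter_le ν _ |>.1 le_rfl).trans_le hstep
end

section
/- The total dual mass dominates b_0 times R: Σ_{i=0}^∞ μ*_i ≥ b_0 · Σ_{i=0}^∞ (1/(μ_i b_i)) Σ_{j=0}^i μ_j = b_0 · R (as values in [0,∞]). In particular, if R = ∞ then Σ_{i=0}^∞ μ*_i = ∞. -/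
/-!
The normalisation by `μ` cancels in the ratios `H_{i+1}/H_i = S_{i+1}/S_i`, where
`S_i = Σ_{j ≤ i} μ_j`, so the product defining `μ*_i` telescopes to the closed form
`μ*_i = b_0 S_i² / (b_i μ_i)`. Since `S_i ≥ μ_0 = 1`, each term `μ*_i` dominates
`b_0 S_i / (μ_i b_i)`, and the inequality follows by summing in `[0,∞]`.
-/

/-- `μ_0 = 1`, `μ_i = (b_0 ⋯ b_{i-1})/(a_1 ⋯ a_i)` for `i ≥ 1`. -/
noncomputable def bdMu (a b : ℕ → ℝ) (i : ℕ) : ℝ :=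
  (∏ k ∈ Finset.range i, b k) / (∏ k ∈ Finset.range i, a (k + 1))

/-- The stationary weights `π_i = μ_i / μ`, where `μ = Σ_j μ_j`. -/
noncomputable def bdPi (a b : ℕ → ℝ) (i : ℕ) : ℝ :=
  bdMu a b i / ∑' j : ℕ, bdMu a b j

/-- `H_i = Σ_{j=0}^i π_j`. -/
noncomputable def bdH (a b : ℕ → ℝ) (i : ℕ) : ℝ :=
  ∑ j ∈ Finset.range (i + 1), bdPi a b j

/-- Dual death rates `a*_i = (H_{i−1}/H_i)·b_i` (used for `i ≥ 1`). -/
noncomputable def bdAStar (a b : ℕ → ℝ) (i : ℕ) : ℝ :=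
  (bdH a b (i - 1) / bdH a b i) * b i

/-- Dual birth rates `b*_i = (H_{i+1}/H_i)·a_{i+1}`. -/
noncomputable def bdBStar (a b : ℕ → ℝ) (i : ℕ) : ℝ :=
  (bdH a b (i + 1) / bdH a b i) * a (i + 1)

/-- Dual masses `μ*_0 = 1`, `μ*_i = (b*_0 ⋯ b*_{i−1})/(a*_1 ⋯ a*_i)`. -/
noncomputable def bdMuStar (a b : ℕ → ℝ) (i : ℕ) : ℝ :=
  bdMu (bdAStar a b) (bdBStar a b) i

noncomputable def bdCumMu (a b : ℕ → ℝ) (i : ℕ) : ℝ :=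
  ∑ j ∈ Finset.range (i + 1), bdMu a b j

section BirthDeath

variable (a b : ℕ → ℝ)

lemma bdMu_zero : bdMu a b 0 = 1 := by simp [bdMu]

lemma bdMu_succ (i : ℕ) : bdMu a b (i + 1) = bdMu a b i * (b i / a (i + 1)) := by
  simp [bdMu, Finset.prod_range_succ, div_mul_div_comm]

variable {a b}

lemma bdMu_pos (ha : ∀ i, 1 ≤ i → 0 < a i) (hb : ∀ i, 0 < b i) (i : ℕ) : 0 < bdMu a b i :=
  div_pos (Finset.prod_pos fun k _ => hb k)
    (Finset.prod_pos fun k _ => ha (k + 1) (Nat.le_add_left 1 k))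

lemma one_le_bdCumMu (hμ : ∀ i, 0 < bdMu a b i) (i : ℕ) : 1 ≤ bdCumMu a b i := by
  rw [← bdMu_zero a b]
  exact Finset.single_le_sum (fun j _ => (hμ j).le) (Finset.mem_range.mpr i.succ_pos)

lemma bdH_eq_bdCumMu_div (i : ℕ) : bdH a b i = bdCumMu a b i / ∑' j, bdMu a b j := by
  simp only [bdH, bdPi, bdCumMu, Finset.sum_div]

lemma bdH_div_bdH (hμ : ∑' j, bdMu a b j ≠ 0) (i j : ℕ) :
    bdH a b i / bdH a b j = bdCumMu a b i / bdCumMu a b j := by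
  rw [bdH_eq_bdCumMu_div, bdH_eq_bdCumMu_div, div_div_div_cancel_right₀ hμ]

lemma bdMuStar_eq (ha : ∀ i, 1 ≤ i → 0 < a i) (hb : ∀ i, 0 < b i)
    (hμ : ∑' j, bdMu a b j ≠ 0) (i : ℕ) :
    bdMuStar a b i = b 0 * bdCumMu a b i ^ 2 / (b i * bdMu a b i) := by
  have hS (n : ℕ) : bdCumMu a b n ≠ 0 :=
    (zero_lt_one.trans_le (one_le_bdCumMu (bdMu_pos ha hb) n)).ne'
  induction i with
  | zero => simp [bdMuStar, bdMu_zero, bdCumMu, (hb 0).ne']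
  | succ n ih =>
    have hAStar : bdAStar a b (n + 1) = bdCumMu a b n / bdCumMu a b (n + 1) * b (n + 1) := by
      rw [bdAStar, Nat.add_sub_cancel, bdH_div_bdH hμ]
    have hBStar : bdBStar a b n = bdCumMu a b (n + 1) / bdCumMu a b n * a (n + 1) := by
      rw [bdBStar, bdH_div_bdH hμ]
    rw [bdMuStar, bdMu_succ, ← bdMuStar, ih, hAStar, hBStar, bdMu_succ]
    have := hS n
    have := hS (n + 1)
    have := (hb n).ne'
    have := (hb (n + 1)).ne'
    have := (ha (n + 1) (Nat.le_add_left 1 n)).ne'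
    have := (bdMu_pos ha hb n).ne'
    field_simp

lemma le_bdMuStar (ha : ∀ i, 1 ≤ i → 0 < a i) (hb : ∀ i, 0 < b i)
    (hμ : ∑' j, bdMu a b j ≠ 0) (i : ℕ) :
    b 0 * (1 / (bdMu a b i * b i) * bdCumMu a b i) ≤ bdMuStar a b i := by
  have hSi := one_le_bdCumMu (bdMu_pos ha hb) i
  calc b 0 * (1 / (bdMu a b i * b i) * bdCumMu a b i)
      = b 0 * bdCumMu a b i / (b i * bdMu a b i) := by ring
    _ ≤ b 0 * (bdCumMu a b i * bdCumMu a b i) / (b i * bdMu a b i) := by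
      have := bdMu_pos ha hb i
      have := hb i
      have := hb 0
      gcongr
      exact le_mul_of_one_le_left (zero_le_one.trans hSi) hSi
    _ = bdMuStar a b i := by rw [bdMuStar_eq ha hb hμ, sq]

end BirthDeath

/-- the total dual mass dominates `b_0·R` (as values in `[0,∞]`), where
`R = Σ_i (1/(μ_i b_i)) Σ_{j=0}^i μ_j`.  In particular if `R = ∞` then `Σ_i μ*_i = ∞`. -/
theorem total_dual_mass_ge
    (a b : ℕ → ℝ) (ha : ∀ i, 1 ≤ i → 0 < a i) (hb : ∀ i, 0 < b i)
    (hmu : Summable (bdMu a b)) :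
    ENNReal.ofReal (b 0) *
        ∑' i : ℕ, ENNReal.ofReal
          ((1 / (bdMu a b i * b i)) * ∑ j ∈ Finset.range (i + 1), bdMu a b j) ≤
      ∑' i : ℕ, ENNReal.ofReal (bdMuStar a b i) ∧
    ((∑' i : ℕ, ENNReal.ofReal
        ((1 / (bdMu a b i * b i)) * ∑ j ∈ Finset.range (i + 1), bdMu a b j)) = ⊤ →
      (∑' i : ℕ, ENNReal.ofReal (bdMuStar a b i)) = ⊤) := by
  have hμ : ∑' j, bdMu a b j ≠ 0 :=
    (hmu.tsum_pos (fun j => (bdMu_pos ha hb j).le) 0 (bdMu_pos ha hb 0)).ne'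
  have hmain : ENNReal.ofReal (b 0) *
      ∑' i, ENNReal.ofReal (1 / (bdMu a b i * b i) * bdCumMu a b i) ≤
        ∑' i, ENNReal.ofReal (bdMuStar a b i) := by
    rw [← ENNReal.tsum_mul_left]
    refine ENNReal.tsum_le_tsum fun i => ?_
    rw [← ENNReal.ofReal_mul (hb 0).le]
    exact ENNReal.ofReal_le_ofReal (le_bdMuStar ha hb hμ i)
  unfold bdCumMu at hmain
  refine ⟨hmain, fun htop => top_le_iff.mp ?_⟩
  rwa [htop, ENNReal.mul_top (ENNReal.ofReal_pos.mpr (hb 0)).ne'] at hmain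
end
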